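/- Let G = {g₁, …, gₙ} be a finite subgroup of the automorphism group of a topological group W, let X = W/G be the orbit space with projection π: W → X, and define μ(π(a), π(b)) = [π(a·g₁(b)), …, π(a·gₙ(b))]. Then μ is well-defined: the multiset [π(a·g(b)) : g ∈ G] does not depend on the choice of representatives a, b of their G-orbits. -/

import Mathlib

/-!
Applying `h⁻¹` to `h a · g (k b)` gives `a · (h⁻¹ g k)(b)` in the same orbit, so changing the
representatives only reindexes the multiset along the bijection `g ↦ h⁻¹ g k` of `G`.
-/

namespace MulAction

variable {G W : Type*} [Group G] [Monoid W] [MulDistribMulAction G W]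

theorem orbitRel_mk_smul_mul_smul (a b : W) (h g : G) :
    Quotient.mk (orbitRel G W) (h • a * g • b) =
      Quotient.mk (orbitRel G W) (a * (h⁻¹ * g) • b) :=
  Quotient.sound ⟨h, by dsimp only; rw [smul_mul', smul_smul, mul_inv_cancel_left]⟩

theorem map_univ_orbitRel_mk_smul_mul_smul [Fintype G] (a b : W) (h k : G) :
    (Finset.univ.val.map fun g : G => Quotient.mk (orbitRel G W) (h • a * g • k • b)) =
      Finset.univ.val.map fun g : G => Quotient.mk (orbitRel G W) (a * g • b) := by
  let e : G ≃ G := (Equiv.mulRight k).trans (Equiv.mulLeft h⁻¹)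
  calc _ = (Finset.univ.val.map e).map fun g => Quotient.mk (orbitRel G W) (a * g • b) := by
        simp only [Multiset.map_map, Function.comp_def, e, Equiv.trans_apply, Equiv.coe_mulRight,
          Equiv.coe_mulLeft, smul_smul, orbitRel_mk_smul_mul_smul]
    _ = _ := by rw [Multiset.map_univ_val_equiv]

end MulAction

open MulAction in
theorem coset_mul_well_defined (W : Type*) [Group W] (G : Subgroup (MulAut W))
    [Fintype G] (a b : W) (h k : G) :
    ((Finset.univ.val : Multiset G).map
        (fun g => Quotient.mk (orbitRel G W) ((h • a) * g • (k • b)))) =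
      ((Finset.univ.val : Multiset G).map
        (fun g => Quotient.mk (orbitRel G W) (a * g • b))) :=
  map_univ_orbitRel_mk_smul_mul_smul a b h k
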